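/- arXiv:2403.01728 — 3 statements merged into one kernel-verified Lean document; each statement's English description precedes it below -/
import Mathlib

section
/- Suppose U is a subspace of U(Vec ℝ) that is invariant under the adjoint actions of e₋₁ and e₀ (i.e., [e₋₁, U] ⊆ U and [e₀, U] ⊆ U), and that, with this adjoint 𝔟-action, U is isomorphic as a 𝔟-module to the tensor density module ℱ_n for some integer n > 0. Then π_λ(U) = 0 for every λ ∈ ℂ. -/
open Polynomial

attribute [local instance 100] LieRing.ofAssociativeRing

noncomputable section

abbrev VecR : Type := Derivation ℂ (Polynomial ℂ) (Polynomial ℂ)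

def eVF (n : ℤ) : VecR := Polynomial.mkDerivation ℂ (X ^ (n + 1).toNat)

lemma vecR_apply (D : VecR) (f : Polynomial ℂ) :
    D f = derivative f * D X := by
  have h : D = Polynomial.mkDerivation ℂ (D X) :=
    Polynomial.derivation_ext (by rw [Polynomial.mkDerivation_X])
  conv_lhs => rw [h]
  rw [Polynomial.mkDerivation_apply]
  simp [smul_eq_mul, mul_comm]

def piL (lam : ℂ) : VecR →ₗ⁅ℂ⁆ Module.End ℂ (Polynomial ℂ) where
  toFun D := D.toLinearMap + lam • (LinearMap.mulLeft ℂ (derivative (D X)))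
  map_add' D1 D2 := by
    refine LinearMap.ext fun g => ?_
    simp only [LinearMap.add_apply, LinearMap.smul_apply, LinearMap.mulLeft_apply,
      Derivation.coeFn_coe, Derivation.add_apply, map_add, smul_eq_C_mul]
    ring
  map_smul' c D := by
    refine LinearMap.ext fun g => ?_
    simp only [RingHom.id_apply, LinearMap.add_apply, LinearMap.smul_apply,
      LinearMap.mulLeft_apply, Derivation.coeFn_coe, Derivation.smul_apply,
      map_smul, smul_eq_C_mul, derivative_C_mul]
    ring
  map_lie' {D1 D2} := by
    refine LinearMap.ext fun g => ?_
    simp only [LieHom.lie_apply, Ring.lie_def, Module.End.mul_apply,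
      LinearMap.add_apply, LinearMap.sub_apply, LinearMap.smul_apply,
      Derivation.coeFn_coe, LinearMap.mulLeft_apply,
      Derivation.commutator_apply, Derivation.map_add, Derivation.map_smul]
    rw [vecR_apply D1 (D2 g), vecR_apply D2 (D1 g),
      vecR_apply D1 (derivative (D2 X) * g), vecR_apply D2 (derivative (D1 X) * g),
      vecR_apply D1 (D2 X), vecR_apply D2 (D1 X),
      vecR_apply D1 g, vecR_apply D2 g]
    simp only [derivative_sub, derivative_add, derivative_neg, derivative_mul, smul_eq_C_mul]
    ring

end
noncomputable section

/-- The universal enveloping algebra of `Vec ℝ`. -/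
abbrev UVec : Type := UniversalEnvelopingAlgebra ℂ VecR

/-- The image of `e n` in the universal enveloping algebra. -/
def eU (n : ℤ) : UVec := UniversalEnvelopingAlgebra.ι ℂ (eVF n)

/-- The extension of `π_λ` to an algebra homomorphism on `U(Vec ℝ)`. -/
def piU (lam : ℂ) : UVec →ₐ[ℂ] Module.End ℂ (Polynomial ℂ) :=
  UniversalEnvelopingAlgebra.lift ℂ (piL lam)

/-- The annihilator of the tensor density module `ℱ_λ`. -/
def AnnF (lam : ℂ) : Submodule ℂ UVec := LinearMap.ker (piU lam).toLinearMap

end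

/-!
Transported along `Φ`, the adjoint `𝔟`-action makes `S p := π_λ(Φ⁻¹ p)` a linear map
`ℂ[x] → End ℂ[x]` with `⁅∂, S p⁆ = S p'` and `⁅x∂, S p⁆ = S (x p' + n p)`, because
`π_λ(e₋₁) = ∂` and `π_λ(e₀) = x∂ + λ`. By induction on `d = deg p`, both `S p'` and
`S (x p' - d p)` vanish, so `T = S p` commutes with `∂` and `⁅x∂, T⁆ = (n + d) T`. Then every
`T (x ^ k)` has zero derivative, and evaluating at `x ^ k` gives `(n + d + k) T (x ^ k) = 0`;
as `n > 0`, `T = 0`.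
-/

namespace Polynomial

noncomputable def eulerOp (R : Type*) [CommSemiring R] : Module.End R R[X] :=
  LinearMap.mulLeft R X ∘ₗ derivative

section CommSemiring

variable {R : Type*} [CommSemiring R]

@[simp]
lemma eulerOp_apply (p : R[X]) : eulerOp R p = X * derivative p := rfl

lemma eulerOp_X_pow (k : ℕ) : eulerOp R (X ^ k) = (k : R) • X ^ k := by
  rcases k with _ | k
  · simp
  · rw [eulerOp_apply, derivative_X_pow, smul_eq_C_mul]
    push_cast
    ring

lemma coeff_eulerOp (p : R[X]) (m : ℕ) : (eulerOp R p).coeff m = m * p.coeff m := by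
  rcases m with _ | m
  · simp
  · rw [eulerOp_apply, coeff_X_mul, coeff_derivative, mul_comm]
    push_cast
    rfl

end CommSemiring

lemma degree_eulerOp_sub_natDegree_smul_lt {R : Type*} [CommRing R] {p : R[X]} (hp : p ≠ 0) :
    (eulerOp R p - (p.natDegree : R) • p).degree < p.degree := by
  rw [degree_eq_natDegree hp, degree_lt_iff_coeff_zero]
  intro m hm
  rw [coeff_sub, coeff_eulerOp, coeff_smul, smul_eq_mul, ← sub_mul]
  rcases hm.eq_or_lt with rfl | hlt
  · rw [sub_self, zero_mul]
  · rw [coeff_eq_zero_of_natDegree_lt hlt, mul_zero]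

variable {K : Type*} [Field K]

lemma eq_zero_of_lie_derivative_eq_zero_of_lie_eulerOp_eq_smul {m : K}
    (hm : ∀ k : ℕ, m + k ≠ 0) {T : Module.End K K[X]}
    (h1 : ⁅(derivative : Module.End K K[X]), T⁆ = 0) (h0 : ⁅eulerOp K, T⁆ = m • T) : T = 0 := by
  have hder (g : K[X]) : derivative (T g) = T (derivative g) := by
    simpa [Ring.lie_def, sub_eq_zero] using LinearMap.congr_fun h1 g
  have hpow_of_derivative (k : ℕ) (hk : derivative (T (X ^ k)) = 0) : T (X ^ k) = 0 := by
    have h := LinearMap.congr_fun h0 (X ^ k)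
    rw [Ring.lie_def, LinearMap.sub_apply, Module.End.mul_apply, Module.End.mul_apply,
      eulerOp_X_pow, map_smul, eulerOp_apply, hk, mul_zero, zero_sub, LinearMap.smul_apply] at h
    have hmk : (m + k) • T (X ^ k) = 0 := by
      rw [add_smul, ← h, neg_add_cancel]
    exact (smul_eq_zero.mp hmk).resolve_left (hm k)
  have hpow (k : ℕ) : T (X ^ k) = 0 := by
    induction k with
    | zero => exact hpow_of_derivative 0 (by simp [hder])
    | succ k ih =>
      refine hpow_of_derivative (k + 1) ?_
      rw [hder, derivative_X_pow, ← smul_eq_C_mul, map_smul, Nat.add_sub_cancel, ih, smul_zero]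
  refine lhom_ext' fun k => LinearMap.ext_ring ?_
  simpa [monomial_one_right_eq_X_pow] using hpow k

theorem linearMap_eq_zero_of_lie_derivative_of_lie_eulerOp {n : K} (hn : ∀ k : ℕ, n + k ≠ 0)
    (S : K[X] →ₗ[K] Module.End K K[X])
    (h1 : ∀ p, ⁅(derivative : Module.End K K[X]), S p⁆ = S (derivative p))
    (h0 : ∀ p, ⁅eulerOp K, S p⁆ = S (eulerOp K p + n • p)) : S = 0 := by
  refine LinearMap.ext fun p => ?_
  change S p = 0
  induction p using degree_lt_wf.induction with
  | _ p ih =>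
    rcases eq_or_ne p 0 with rfl | hp
    · exact map_zero S
    refine eq_zero_of_lie_derivative_eq_zero_of_lie_eulerOp_eq_smul
      (m := n + p.natDegree) (fun k => by simpa [add_assoc] using hn (p.natDegree + k)) ?_ ?_
    · rw [h1, ih _ (degree_derivative_lt hp)]
    · have hsplit : eulerOp K p + n • p =
          (eulerOp K p - (p.natDegree : K) • p) + (n + p.natDegree) • p := by
        module
      rw [h0, hsplit, map_add, ih _ (degree_eulerOp_sub_natDegree_smul_lt hp), zero_add, map_smul]

end Polynomial

lemma LinearEquiv.coe_symm_intertwines {R M N : Type*} [Semiring R] [AddCommMonoid M]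
    [Module R M] [AddCommMonoid N] [Module R N] {U : Submodule R M} (Φ : U ≃ₗ[R] N)
    {f : M → M} (hf : ∀ u ∈ U, f u ∈ U) {g : N → N}
    (h : ∀ (u : M) (hu : u ∈ U), Φ ⟨f u, hf u hu⟩ = g (Φ ⟨u, hu⟩)) (p : N) :
    f (Φ.symm p) = Φ.symm (g p) := by
  have hp := h _ (Φ.symm p).2
  simp only [Subtype.coe_eta, LinearEquiv.apply_symm_apply] at hp
  rw [← hp, LinearEquiv.symm_apply_apply]

lemma piL_apply (lam : ℂ) (D : VecR) (g : ℂ[X]) :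
    piL lam D g = derivative g * D X + lam • (derivative (D X) * g) := by
  rw [← vecR_apply]
  rfl

lemma piL_eVF_neg_one (lam : ℂ) : piL lam (eVF (-1)) = derivative := by
  refine LinearMap.ext fun g => ?_
  simp [piL_apply, eVF, mkDerivation_X]

lemma piL_eVF_zero (lam : ℂ) : piL lam (eVF 0) = eulerOp ℂ + lam • 1 := by
  refine LinearMap.ext fun g => ?_
  simp [piL_apply, eVF, mkDerivation_X, mul_comm]

lemma piU_eU_mul_sub_mul_eU (lam : ℂ) (m : ℤ) (u : UVec) :
    piU lam (eU m * u - u * eU m) = ⁅piL lam (eVF m), piU lam u⁆ := by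
  simp [Ring.lie_def, piU, eU]

/-- If `U ⊆ U(Vec ℝ)` is a subspace invariant under the adjoint actions of
`e₋₁` and `e₀`, and with this adjoint `𝔟`-action `U` is isomorphic as a
`𝔟`-module to `ℱ_n` for some integer `n > 0`, then `π_λ(U) = 0` for every `λ`. -/
theorem b_module_F_n_annihilated (n : ℤ) (hn : 0 < n) (U : Submodule ℂ UVec)
    (hinv1 : ∀ u ∈ U, eU (-1) * u - u * eU (-1) ∈ U)
    (hinv0 : ∀ u ∈ U, eU 0 * u - u * eU 0 ∈ U)
    (Φ : U ≃ₗ[ℂ] Polynomial ℂ)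
    (heq1 : ∀ (u : UVec) (hu : u ∈ U),
      Φ ⟨eU (-1) * u - u * eU (-1), hinv1 u hu⟩ = piL (n : ℂ) (eVF (-1)) (Φ ⟨u, hu⟩))
    (heq0 : ∀ (u : UVec) (hu : u ∈ U),
      Φ ⟨eU 0 * u - u * eU 0, hinv0 u hu⟩ = piL (n : ℂ) (eVF 0) (Φ ⟨u, hu⟩)) :
    ∀ lam : ℂ, ∀ u ∈ U, piU lam u = 0 := by
  intro lam
  set S : ℂ[X] →ₗ[ℂ] Module.End ℂ ℂ[X] :=
    (piU lam).toLinearMap ∘ₗ U.subtype ∘ₗ Φ.symm.toLinearMap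
  have hS0 : S = 0 := by
    refine linearMap_eq_zero_of_lie_derivative_of_lie_eulerOp (n := (n : ℂ))
      (fun k => by exact_mod_cast (show n + k ≠ 0 by omega)) S (fun p => ?_) (fun p => ?_)
    · have hcomm := Φ.coe_symm_intertwines hinv1 heq1 p
      rw [piL_eVF_neg_one] at hcomm
      simp [S, ← piL_eVF_neg_one lam, ← piU_eU_mul_sub_mul_eU, hcomm]
    · have hcomm := Φ.coe_symm_intertwines hinv0 heq0 p
      rw [piL_eVF_zero] at hcomm
      calc ⁅eulerOp ℂ, S p⁆ = ⁅piL lam (eVF 0), S p⁆ := by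
            simp [piL_eVF_zero, Ring.lie_def, add_mul, mul_add]
        _ = S (eulerOp ℂ p + (n : ℂ) • p) := by
            simp [S, ← piU_eU_mul_sub_mul_eU, hcomm]
  intro u hu
  simpa [S] using LinearMap.congr_fun hS0 (Φ ⟨u, hu⟩)
end

section
/- For all a, λ ∈ ℂ, the annihilators in U(Vec ℝ) of the three modules ℱ_{a,λ}, ℱ_λ, and ℱ_λ⁻ coincide: Ann(ℱ_{a,λ}) = Ann(ℱ_λ) = Ann(ℱ_λ⁻). -/
open Polynomial

attribute [local instance 100] LieRing.ofAssociativeRing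

noncomputable section

/-- `ρ` is the representation `ℱ_{a,λ}` of `Vec ℝ` on the space with basis
`{x^{a+m} : m ∈ ℤ}` (realized as `ℤ →₀ ℂ`, with `Finsupp.single m 1`
representing `x^{a+m}`) if `e_n · x^{a+m} = (a + m + λ(n+1)) x^{a+m+n}` for all
`n ≥ -1` and `m ∈ ℤ`. -/
def IsFaRep (a lam : ℂ) (ρ : VecR →ₗ⁅ℂ⁆ Module.End ℂ (ℤ →₀ ℂ)) : Prop :=
  ∀ n : ℤ, -1 ≤ n → ∀ m : ℤ,
    ρ (eVF n) (Finsupp.single m 1) =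
      (a + m + lam * (n + 1)) • Finsupp.single (m + n) (1 : ℂ)

/-- `ρ` is the representation `ℱ_λ⁻` of `Vec ℝ` on the space with basis
`{x^{-m} : m ≥ 1}` (realized as `ℕ →₀ ℂ`, with `Finsupp.single i 1`
representing `x^{-(i+1)}`) if `e_n · x^{-m} = (λ(n+1) − m) x^{n-m}` when
`n − m ≤ -1` and `e_n · x^{-m} = 0` when `n − m ≥ 0`, for all `n ≥ -1`. -/
def IsFmRep (lam : ℂ) (ρ : VecR →ₗ⁅ℂ⁆ Module.End ℂ (ℕ →₀ ℂ)) : Prop :=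
  ∀ n : ℤ, -1 ≤ n → ∀ i : ℕ,
    ρ (eVF n) (Finsupp.single i 1) =
      if n ≤ (i : ℤ) then
        (lam * (n + 1) - ((i : ℂ) + 1)) • Finsupp.single ((i : ℤ) - n).toNat (1 : ℂ)
      else 0

end

/-!
The matrix coefficients of `ℱ_{a,λ}` depend polynomially on `a`: all the modules `ℱ_{a,λ}` are
specializations of a single module `ℱ_{t,λ}` over `ℂ[t]`, where specializing `t` to `a + s`
(`s ∈ ℤ`) gives `ℱ_{a,λ}` with its basis relabelled by `s`. Hence `u` kills `ℱ_{a,λ}` iff its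
generic matrix coefficients vanish at the infinitely many points `a + s`, i.e. vanish identically;
this condition does not involve `a`. The module `ℱ_λ` is the submodule of `ℱ_{0,λ}` on the
nonnegative powers of `x` and `ℱ_λ⁻` the quotient by it; each still sees the generic coefficients at
`t = s` for all `s` in a half-line of `ℤ`, which is again infinitely many points.

All these representations are `f ∂ₓ ↦ f(x) d + λ f'(x)` for a pair `x, d` with `[d, x] = 1`, which
reduces the bracket relation to a computation in the Weyl algebra.
-/

open UniversalEnvelopingAlgebra

section Intertwining

variable {R L V W : Type*} [CommRing R] [LieRing L] [LieAlgebra R L]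
  [AddCommGroup V] [Module R V] [AddCommGroup W] [Module R W]

theorem UniversalEnvelopingAlgebra.lift_intertwine (ρ₁ : L →ₗ⁅R⁆ Module.End R V)
    (ρ₂ : L →ₗ⁅R⁆ Module.End R W) (T : V →ₗ[R] W) (h : ∀ x, T ∘ₗ ρ₁ x = ρ₂ x ∘ₗ T)
    (u : UniversalEnvelopingAlgebra R L) :
    T ∘ₗ lift R ρ₁ u = lift R ρ₂ u ∘ₗ T := by
  obtain ⟨t, rfl⟩ : ∃ t, mkAlgHom R L t = u := RingCon.mkₐ_surjective (α := R) _ u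
  induction t using TensorAlgebra.induction with
  | algebraMap r => ext v; simp [Module.algebraMap_end_apply]
  | ι x => rw [← ι_apply, lift_ι_apply, lift_ι_apply]; exact h x
  | mul s t hs ht =>
      rw [map_mul, map_mul, map_mul, Module.End.mul_eq_comp, Module.End.mul_eq_comp,
        ← LinearMap.comp_assoc, hs, LinearMap.comp_assoc, ht, LinearMap.comp_assoc]
  | add s t hs ht => rw [map_add, map_add, map_add, LinearMap.comp_add, LinearMap.add_comp, hs, ht]

end Intertwining

lemma span_range_eVF : Submodule.span ℂ (Set.range fun j : ℕ => eVF (j - 1)) = ⊤ := by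
  refine Submodule.eq_top_iff'.2 fun D => ?_
  rw [show D = mkDerivation ℂ (D X) from derivation_ext (by rw [mkDerivation_X])]
  induction D X using Polynomial.induction_on' with
  | add p q hp hq => rw [map_add]; exact add_mem hp hq
  | monomial j c =>
      rw [← smul_X_eq_monomial, map_smul]
      refine Submodule.smul_mem _ _ (Submodule.subset_span ⟨j, ?_⟩)
      simp only [eVF, sub_add_cancel, Int.toNat_natCast]

theorem lift_intertwine_of_eVF {V W : Type*} [AddCommGroup V] [Module ℂ V]
    [AddCommGroup W] [Module ℂ W] (ρ₁ : VecR →ₗ⁅ℂ⁆ Module.End ℂ V)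
    (ρ₂ : VecR →ₗ⁅ℂ⁆ Module.End ℂ W) (T : V →ₗ[ℂ] W)
    (h : ∀ n : ℤ, -1 ≤ n → T ∘ₗ ρ₁ (eVF n) = ρ₂ (eVF n) ∘ₗ T) (u : UVec) :
    T ∘ₗ lift ℂ ρ₁ u = lift ℂ ρ₂ u ∘ₗ T := by
  refine lift_intertwine ρ₁ ρ₂ T (fun D => ?_) u
  have hD : D ∈ Submodule.span ℂ (Set.range fun j : ℕ => eVF (j - 1)) :=
    span_range_eVF ▸ Submodule.mem_top
  induction hD using Submodule.span_induction with
  | mem x hx => obtain ⟨j, rfl⟩ := hx; exact h _ (by omega)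
  | zero => simp
  | add x y _ _ hx hy => simp [LinearMap.comp_add, LinearMap.add_comp, hx, hy]
  | smul c x _ hx => simp [LinearMap.comp_smul, LinearMap.smul_comp, hx]

noncomputable section Weyl

variable {B : Type*} [Ring B] [Algebra ℂ B]

theorem commutator_aeval_eq_aeval_derivative {x d : B} (hd : d * x - x * d = 1) (f : ℂ[X]) :
    d * aeval x f - aeval x f * d = aeval x (derivative f) := by
  induction f using Polynomial.induction_on with
  | C c => simp [Algebra.commutes]
  | add p q hp hq => simp only [map_add, mul_add, add_mul, ← hp, ← hq]; abel
  | monomial n c h =>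
      set P := aeval x (C c * X ^ n)
      have hsplit : d * (P * x) - P * x * d = (d * P - P * d) * x + P * (d * x - x * d) := by
        noncomm_ring
      rw [pow_succ, ← mul_assoc, map_mul, aeval_X, hsplit, h, hd, mul_one,
        derivative_mul (f := C c * X ^ n), derivative_X, mul_one, map_add, map_mul (aeval x),
        aeval_X]

variable (lam : ℂ) (x d : B)

/-- The action of `f ∂ₓ` on `λ`-densities, `f ∂ₓ + λ f'`, written with `x` and `d` for `x` and
`∂ₓ`. -/
def weylOp (f : ℂ[X]) : B := aeval x f * d + lam • aeval x (derivative f)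

variable {x d}

theorem weylOp_mul (hd : d * x - x * d = 1) (f g : ℂ[X]) :
    weylOp lam x d f * weylOp lam x d g =
      aeval x (f * g) * (d * d)
        + aeval x (f * derivative g + lam • (f * derivative g + derivative f * g)) * d
        + aeval x (lam • (f * derivative (derivative g))
          + (lam * lam) • (derivative f * derivative g)) := by
  have hcomm : ∀ (p : ℂ[X]) y,
      d * (aeval x p * y) = aeval x p * (d * y) + aeval x (derivative p) * y := by
    intro p y
    rw [← mul_assoc, ← mul_assoc, ← commutator_aeval_eq_aeval_derivative hd]; noncomm_ring
  have hprod : ∀ (p q : ℂ[X]) y, aeval x p * (aeval x q * y) = aeval x (p * q) * y := by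
    intro p q y; rw [← mul_assoc, map_mul]
  have hcomm' : ∀ p : ℂ[X], d * aeval x p = aeval x p * d + aeval x (derivative p) := by
    intro p; simpa using hcomm p 1
  simp only [weylOp, add_mul, mul_add, smul_mul_assoc, mul_smul_comm, mul_assoc, hcomm, hcomm',
    hprod, ← map_mul (aeval x), map_add, map_smul, smul_add, smul_smul]
  abel

theorem weylOp_commutator (hd : d * x - x * d = 1) (f g : ℂ[X]) :
    weylOp lam x d f * weylOp lam x d g - weylOp lam x d g * weylOp lam x d f =
      weylOp lam x d (derivative g * f - derivative f * g) := by
  have hsub : ∀ a b c a' b' c' : ℂ[X],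
      (aeval x a * (d * d) + aeval x b * d + aeval x c)
        - (aeval x a' * (d * d) + aeval x b' * d + aeval x c')
        = aeval x (a - a') * (d * d) + aeval x (b - b') * d + aeval x (c - c') := by
    intros; simp only [map_sub, sub_mul]; abel
  rw [weylOp_mul lam hd, weylOp_mul lam hd, hsub, mul_comm f g, sub_self, map_zero, zero_mul,
    zero_add, weylOp, ← map_smul]
  congr 3 <;> simp only [smul_eq_C_mul, derivative_mul, derivative_sub] <;> ring

def densityLieHom (hd : d * x - x * d = 1) : VecR →ₗ⁅ℂ⁆ B where
  toFun D := weylOp lam x d (D X)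
  map_add' D₁ D₂ := by
    simp only [weylOp, Derivation.add_apply, map_add, add_mul, smul_add]; abel
  map_smul' c D := by
    simp only [weylOp, Derivation.smul_apply, map_smul, smul_mul_assoc,
      smul_add, RingHom.id_apply]
    rw [smul_comm lam c]
  map_lie' {D₁ D₂} := by
    rw [LieRing.of_associative_ring_bracket, weylOp_commutator lam hd, Derivation.commutator_apply,
      vecR_apply D₁ (D₂ X), vecR_apply D₂ (D₁ X)]

end Weyl

noncomputable section DensityModule

open Finsupp

variable (A : Type*) [CommRing A] [Algebra ℂ A]

/-- With `single m p` standing for `p x^(α + m)`, `shiftOp` is multiplication by `x` and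
`derivOp α` is `∂ₓ`. -/
def shiftOp : Module.End ℂ (ℤ →₀ A) := lmapDomain A ℂ (· + 1)

variable {A}

def derivOp (α : A) : Module.End ℂ (ℤ →₀ A) :=
  lsum ℂ fun m => (lsingle (m - 1)).comp (LinearMap.mulLeft ℂ (α + m))

lemma shiftOp_pow_single (k : ℕ) (m : ℤ) (p : A) :
    (shiftOp A ^ k) (single m p) = single (m + k) p := by
  induction k with
  | zero => simp
  | succ k ih =>
      rw [pow_succ', Module.End.mul_apply, ih, shiftOp, lmapDomain_apply, mapDomain_single]
      push_cast; ring_nf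

lemma derivOp_single (α : A) (m : ℤ) (p : A) :
    derivOp α (single m p) = single (m - 1) ((α + m) * p) := by
  simp [derivOp]

lemma derivOp_mul_shiftOp_sub (α : A) : derivOp α * shiftOp A - shiftOp A * derivOp α = 1 := by
  refine lhom_ext fun m p => ?_
  simp only [LinearMap.sub_apply, Module.End.mul_apply, Module.End.one_apply, shiftOp,
    lmapDomain_apply, mapDomain_single, derivOp_single, add_sub_cancel_right, sub_add_cancel,
    ← single_sub]
  congr 1
  push_cast
  ring

variable (lam : ℂ)

def densityRep (α : A) : VecR →ₗ⁅ℂ⁆ Module.End ℂ (ℤ →₀ A) :=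
  densityLieHom lam (derivOp_mul_shiftOp_sub α)

lemma densityRep_eVF_single (α : A) {n : ℤ} (hn : -1 ≤ n) (m : ℤ) (p : A) :
    densityRep lam α (eVF n) (single m p) =
      single (m + n) ((α + m + algebraMap ℂ A (lam * (n + 1))) * p) := by
  obtain ⟨j, rfl⟩ : ∃ j : ℕ, n = j - 1 := ⟨(n + 1).toNat, by omega⟩
  have hX : eVF (j - 1) X = X ^ j := by simp [eVF]
  change weylOp lam (shiftOp A) (derivOp α) (eVF (j - 1) X) (single m p) = _
  rw [hX, weylOp, LinearMap.add_apply, Module.End.mul_apply, derivOp_single, aeval_X_pow,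
    shiftOp_pow_single, LinearMap.smul_apply, derivative_X_pow, map_mul, aeval_C, aeval_X_pow,
    Module.End.mul_apply, Module.algebraMap_end_apply, shiftOp_pow_single]
  rcases j with _ | j
  · simp only [CharP.cast_eq_zero, zero_smul, smul_zero, add_zero]
    norm_num [sub_eq_add_neg]
  · have hidx₁ : m + ((j + 1 - 1 : ℕ) : ℤ) = m - 1 + ((j + 1 : ℕ) : ℤ) := by push_cast; ring
    have hidx₂ : m + (((j + 1 : ℕ) : ℤ) - 1) = m - 1 + ((j + 1 : ℕ) : ℤ) := by ring
    rw [hidx₁, hidx₂, smul_single, smul_single, ← single_add]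
    congr 1
    simp only [Algebra.smul_def, map_mul, map_natCast]
    push_cast
    ring

end DensityModule

theorem Polynomial.eq_zero_of_eval_add_intCast_eq_zero {R : Type*} [CommRing R] [IsDomain R]
    [CharZero R] {p : R[X]} (a : R) {S : Set ℤ} (hS : S.Infinite)
    (h : ∀ s ∈ S, p.eval (a + s) = 0) : p = 0 := by
  have hinj : Set.InjOn (fun s : ℤ => a + s) S :=
    ((add_right_injective a).comp Int.cast_injective).injOn
  refine p.eq_zero_of_infinite_isRoot ((hS.image hinj).mono ?_)
  rintro _ ⟨s, hs, rfl⟩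
  exact h s hs

noncomputable section Annihilators

open Finsupp

variable (lam : ℂ)

lemma isFaRep_densityRep (a : ℂ) : IsFaRep a lam (densityRep lam a) := by
  intro n hn m
  simp only [densityRep_eVF_single lam a hn, smul_single, smul_eq_mul, mul_one,
    Algebra.algebraMap_self, RingHom.id_apply]

/-- The matrix coefficients of `u` on `ℱ_{t,λ}`, with the variable of `ℂ[X]` playing the role
of `t`. -/
def genericCoeff (u : UVec) (m k : ℤ) : ℂ[X] :=
  lift ℂ (densityRep lam (X : ℂ[X])) u (single m 1) k

/-- Specialization `t ↦ a + s`: it sends `x^(t + m)` to `x^(a + (m + s))`. -/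
def evalShift (a : ℂ) (s : ℤ) : (ℤ →₀ ℂ[X]) →ₗ[ℂ] (ℤ →₀ ℂ) :=
  (lmapDomain ℂ ℂ (· + s)).comp (mapRange.linearMap (leval (a + s)))

variable {lam}

lemma evalShift_single (a : ℂ) (s m : ℤ) (p : ℂ[X]) :
    evalShift a s (single m p) = single (m + s) (p.eval (a + s)) := by
  simp [evalShift]

lemma evalShift_apply_add (a : ℂ) (s : ℤ) (w : ℤ →₀ ℂ[X]) (k : ℤ) :
    evalShift a s w (k + s) = (w k).eval (a + s) := by
  simp [evalShift, mapDomain_apply (add_left_injective s)]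

lemma evalShift_comp_densityRep {a : ℂ} {ρ : VecR →ₗ⁅ℂ⁆ Module.End ℂ (ℤ →₀ ℂ)}
    (hρ : IsFaRep a lam ρ) (s : ℤ) {n : ℤ} (hn : -1 ≤ n) :
    evalShift a s ∘ₗ densityRep lam (X : ℂ[X]) (eVF n) = ρ (eVF n) ∘ₗ evalShift a s := by
  refine lhom_ext fun m p => ?_
  have hsingle : single (m + s) (p.eval (a + s)) = p.eval (a + s) • single (m + s) (1 : ℂ) := by
    rw [smul_single, smul_eq_mul, mul_one]
  rw [LinearMap.comp_apply, LinearMap.comp_apply, densityRep_eVF_single lam _ hn, evalShift_single,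
    evalShift_single, hsingle, map_smul, hρ n hn, smul_single, smul_single, smul_eq_mul,
    smul_eq_mul, mul_one]
  congr 1
  · ring
  · simp only [eval_mul, eval_add, eval_X, eval_intCast, Polynomial.algebraMap_eq, eval_C]
    push_cast
    ring

theorem lift_single_add_apply_add {a : ℂ} {ρ : VecR →ₗ⁅ℂ⁆ Module.End ℂ (ℤ →₀ ℂ)}
    (hρ : IsFaRep a lam ρ) (u : UVec) (m k s : ℤ) :
    lift ℂ ρ u (single (m + s) 1) (k + s) = (genericCoeff lam u m k).eval (a + s) := by
  have h := LinearMap.congr_fun (lift_intertwine_of_eVF _ ρ (evalShift a s)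
    (fun n hn => evalShift_comp_densityRep hρ s hn) u) (single m 1)
  rw [LinearMap.comp_apply, LinearMap.comp_apply, evalShift_single, eval_one] at h
  rw [← h, evalShift_apply_add, genericCoeff]

theorem lift_eq_zero_iff_of_isFaRep {a : ℂ} {ρ : VecR →ₗ⁅ℂ⁆ Module.End ℂ (ℤ →₀ ℂ)}
    (hρ : IsFaRep a lam ρ) (u : UVec) : lift ℂ ρ u = 0 ↔ genericCoeff lam u = 0 := by
  constructor
  · intro h
    ext m k : 2
    refine eq_zero_of_eval_add_intCast_eq_zero a Set.infinite_univ fun s _ => ?_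
    rw [← lift_single_add_apply_add hρ, h, LinearMap.zero_apply, Finsupp.coe_zero, Pi.zero_apply]
  · intro h
    refine lhom_ext' fun m => LinearMap.ext_ring (ext fun k => ?_)
    simpa [h] using lift_single_add_apply_add hρ u m k 0

end Annihilators

noncomputable section TensorDensities

open Finsupp

variable {lam : ℂ}

/-- `ℱ_λ` inside `ℱ_{0,λ}`: `g ↦ g(x) x^0`. -/
def polyEmbed : ℂ[X] →ₗ[ℂ] (ℤ →₀ ℂ) :=
  LinearMap.applyₗ (single 0 1) ∘ₗ (aeval (shiftOp ℂ)).toLinearMap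

lemma polyEmbed_apply (g : ℂ[X]) : polyEmbed g = aeval (shiftOp ℂ) g (single 0 1) := rfl

lemma polyEmbed_X_pow (j : ℕ) : polyEmbed (X ^ j) = single (j : ℤ) 1 := by
  rw [polyEmbed_apply, aeval_X_pow, shiftOp_pow_single, zero_add]

lemma polyEmbed_apply_natCast (g : ℂ[X]) (k : ℕ) : polyEmbed g k = g.coeff k := by
  induction g using Polynomial.induction_on' with
  | add p q hp hq => rw [map_add, Finsupp.add_apply, hp, hq, coeff_add]
  | monomial j c =>
      rw [← smul_X_eq_monomial, map_smul, polyEmbed_X_pow, Finsupp.smul_apply, coeff_smul,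
        coeff_X_pow, single_apply]
      simp only [Nat.cast_inj, eq_comm]

lemma polyEmbed_injective : Function.Injective polyEmbed := fun g h hgh =>
  Polynomial.ext fun k => by rw [← polyEmbed_apply_natCast, hgh, polyEmbed_apply_natCast]

lemma polyEmbed_comp_piL (D : VecR) :
    polyEmbed ∘ₗ piL lam D = densityRep lam (0 : ℂ) D ∘ₗ polyEmbed := by
  refine LinearMap.ext fun g => ?_
  have hvanish : derivOp (0 : ℂ) (single 0 1) = 0 := by simp [derivOp_single]
  have hcomm := LinearMap.congr_fun
    (commutator_aeval_eq_aeval_derivative (derivOp_mul_shiftOp_sub (0 : ℂ)) g) (single 0 1)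
  rw [LinearMap.sub_apply, Module.End.mul_apply, Module.End.mul_apply, hvanish, map_zero,
    sub_zero] at hcomm
  change polyEmbed (D g + lam • (derivative (D X) * g)) =
    weylOp lam (shiftOp ℂ) (derivOp 0) (D X) (polyEmbed g)
  rw [vecR_apply, weylOp, LinearMap.add_apply, Module.End.mul_apply, polyEmbed_apply g, hcomm,
    mul_comm (derivative g)]
  simp only [map_add, map_smul, map_mul, polyEmbed_apply, Module.End.mul_apply,
    LinearMap.smul_apply]

theorem piU_eq_zero_iff (u : UVec) : piU lam u = 0 ↔ genericCoeff lam u = 0 := by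
  have hint (g : ℂ[X]) :
      polyEmbed (piU lam u g) = lift ℂ (densityRep lam (0 : ℂ)) u (polyEmbed g) :=
    LinearMap.congr_fun (lift_intertwine _ _ polyEmbed polyEmbed_comp_piL u) g
  constructor
  · intro h
    ext m k : 2
    refine eq_zero_of_eval_add_intCast_eq_zero 0 (Set.Ici_infinite (-m)) fun s hs => ?_
    obtain ⟨j, hj⟩ : ∃ j : ℕ, m + s = j := ⟨(m + s).toNat, by grind⟩
    rw [← lift_single_add_apply_add (isFaRep_densityRep lam 0), hj, ← polyEmbed_X_pow, ← hint, h,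
      LinearMap.zero_apply, map_zero, Finsupp.coe_zero, Pi.zero_apply]
  · rw [← lift_eq_zero_iff_of_isFaRep (isFaRep_densityRep lam 0)]
    intro h
    refine LinearMap.ext fun g => polyEmbed_injective ?_
    rw [hint, h, LinearMap.zero_apply, LinearMap.zero_apply, map_zero]

/-- The quotient map `ℱ_{0,λ} → ℱ_{0,λ} / ℱ_λ ≅ ℱ_λ⁻`. -/
def projNeg : (ℤ →₀ ℂ) →ₗ[ℂ] (ℕ →₀ ℂ) :=
  lcomapDomain (fun i : ℕ => -(i : ℤ) - 1) fun i j hij => by simpa using hij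

lemma projNeg_apply (w : ℤ →₀ ℂ) (i : ℕ) : projNeg w i = w (-(i : ℤ) - 1) := rfl

lemma projNeg_single_neg (i : ℕ) (c : ℂ) : projNeg (single (-(i : ℤ) - 1) c) = single i c := by
  ext j
  simp only [projNeg_apply, single_apply]
  grind

lemma projNeg_single_of_nonneg {m : ℤ} (hm : 0 ≤ m) (c : ℂ) : projNeg (single m c) = 0 := by
  ext j
  simp only [projNeg_apply, single_apply]
  grind

lemma projNeg_comp_densityRep {ρ : VecR →ₗ⁅ℂ⁆ Module.End ℂ (ℕ →₀ ℂ)} (hρ : IsFmRep lam ρ)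
    {n : ℤ} (hn : -1 ≤ n) :
    projNeg ∘ₗ densityRep lam (0 : ℂ) (eVF n) = ρ (eVF n) ∘ₗ projNeg := by
  refine lhom_ext fun m c => ?_
  simp only [LinearMap.comp_apply, densityRep_eVF_single lam _ hn, zero_add,
    Algebra.algebraMap_self, RingHom.id_apply]
  rcases lt_or_ge m 0 with hm | hm
  · obtain ⟨i, rfl⟩ : ∃ i : ℕ, m = -(i : ℤ) - 1 := ⟨(-m - 1).toNat, by omega⟩
    rw [projNeg_single_neg, show single i c = c • single i (1 : ℂ) by simp, map_smul, hρ n hn]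
    split_ifs with hni
    · obtain ⟨l, hl⟩ : ∃ l : ℕ, (i : ℤ) - n = l := ⟨((i : ℤ) - n).toNat, by omega⟩
      rw [show -(i : ℤ) - 1 + n = -(l : ℤ) - 1 by omega, projNeg_single_neg, hl, Int.toNat_natCast,
        smul_smul, smul_single, smul_eq_mul, mul_one]
      congr 1
      push_cast
      ring
    · rw [projNeg_single_of_nonneg (by omega), smul_zero]
  · rw [projNeg_single_of_nonneg hm, map_zero]
    rcases eq_or_lt_of_le (show -1 ≤ m + n by omega) with hmn | hmn
    · obtain ⟨rfl, rfl⟩ : m = 0 ∧ n = -1 := by omega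
      simp
    · exact projNeg_single_of_nonneg (by omega) _

theorem lift_eq_zero_iff_of_isFmRep {ρ : VecR →ₗ⁅ℂ⁆ Module.End ℂ (ℕ →₀ ℂ)} (hρ : IsFmRep lam ρ)
    (u : UVec) : lift ℂ ρ u = 0 ↔ genericCoeff lam u = 0 := by
  have hint (w : ℤ →₀ ℂ) : projNeg (lift ℂ (densityRep lam (0 : ℂ)) u w) = lift ℂ ρ u (projNeg w) :=
    LinearMap.congr_fun (lift_intertwine_of_eVF _ _ projNeg
      (fun n hn => projNeg_comp_densityRep hρ hn) u) w
  constructor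
  · intro h
    ext m k : 2
    refine eq_zero_of_eval_add_intCast_eq_zero 0 (Set.Iic_infinite (-1 - k)) fun s hs => ?_
    obtain ⟨i, hi⟩ : ∃ i : ℕ, k + s = -(i : ℤ) - 1 := ⟨(-(k + s) - 1).toNat, by grind⟩
    rw [← lift_single_add_apply_add (isFaRep_densityRep lam 0), hi, ← projNeg_apply, hint, h,
      LinearMap.zero_apply, Finsupp.coe_zero, Pi.zero_apply]
  · rw [← lift_eq_zero_iff_of_isFaRep (isFaRep_densityRep lam 0)]
    intro h
    refine lhom_ext' fun i => LinearMap.ext_ring ?_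
    rw [LinearMap.comp_apply, lsingle_apply, ← projNeg_single_neg, ← hint, h, LinearMap.zero_apply,
      map_zero, LinearMap.zero_comp, LinearMap.zero_apply]

end TensorDensities

/-- For all `a, λ ∈ ℂ`, the annihilators of `ℱ_{a,λ}`, `ℱ_λ`, and `ℱ_λ⁻` in
`U(Vec ℝ)` coincide. -/
theorem ann_Fa_eq_ann_F_eq_ann_Fm (a lam : ℂ)
    (ρa : VecR →ₗ⁅ℂ⁆ Module.End ℂ (ℤ →₀ ℂ)) (hρa : IsFaRep a lam ρa)
    (ρm : VecR →ₗ⁅ℂ⁆ Module.End ℂ (ℕ →₀ ℂ)) (hρm : IsFmRep lam ρm) :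
    LinearMap.ker (UniversalEnvelopingAlgebra.lift ℂ ρa).toLinearMap = AnnF lam ∧
    AnnF lam = LinearMap.ker (UniversalEnvelopingAlgebra.lift ℂ ρm).toLinearMap := by
  constructor <;> ext u <;>
    simp only [AnnF, LinearMap.mem_ker, AlgHom.toLinearMap_apply, piU_eq_zero_iff,
      lift_eq_zero_iff_of_isFaRep hρa, lift_eq_zero_iff_of_isFmRep hρm]
end

section
/- Set Z := (1/2)(e₁e₀ − e₂e₋₁ − e₁) in U(Vec ℝ). For every λ ∈ ℂ, π_λ(Z) is the operator of multiplication by q(λ)·x on ℂ[x]; that is, π_λ(Z)(g) = (λ² − λ)·x·g for all g ∈ ℂ[x]. -/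
open Polynomial

attribute [local instance 100] LieRing.ofAssociativeRing

noncomputable section

/-- `Q = e₀² − e₀ − e₁e₋₁`, the Casimir element of the projective subalgebra. -/
def Qel : UVec := eU 0 ^ 2 - eU 0 - eU 1 * eU (-1)

/-- `Z = (1/2)(e₁e₀ − e₂e₋₁ − e₁)`. -/
def Zel : UVec := (1 / 2 : ℂ) • (eU 1 * eU 0 - eU 2 * eU (-1) - eU 1)

/-- `Y = Q(e₀ − 1/2) − Ze₋₁`. -/
def Yel : UVec := Qel * (eU 0 - (1 / 2 : ℂ) • 1) - Zel * eU (-1)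

/-- `Q^{e₂} = 3e₁² − 2e₂(2e₀ + 1) + e₃e₋₁`. -/
def Qe2 : UVec := 3 * eU 1 ^ 2 - 2 * eU 2 * (2 * eU 0 + 1) + eU 3 * eU (-1)

end

lemma eVF_X (n : ℤ) : eVF n X = X ^ (n + 1).toNat :=
  Polynomial.mkDerivation_X ℂ _

lemma piU_eU_sub_one_apply (lam : ℂ) (k : ℕ) (g : ℂ[X]) :
    piU lam (eU (k - 1)) g = derivative g * X ^ k + (k * lam) • (X ^ (k - 1) * g) := by
  rw [piU, eU, UniversalEnvelopingAlgebra.lift_ι_apply, piL_apply, eVF_X, sub_add_cancel,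
    Int.toNat_natCast, derivative_X_pow, mul_assoc, ← smul_eq_C_mul, smul_smul, mul_comm lam]

lemma piU_two_smul_Zel_apply (lam : ℂ) (g : ℂ[X]) :
    piU lam ((2 : ℂ) • Zel) g = (2 * (lam ^ 2 - lam)) • (X * g) := by
  rw [Zel, smul_smul, mul_one_div_cancel two_ne_zero, one_smul]
  have e_neg_one := piU_eU_sub_one_apply lam 0
  have e_zero := piU_eU_sub_one_apply lam 1
  have e_one := piU_eU_sub_one_apply lam 2
  have e_two := piU_eU_sub_one_apply lam 3
  norm_num at e_neg_one e_zero e_one e_two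
  simp only [map_sub, map_mul, LinearMap.sub_apply, Module.End.mul_apply,
    e_neg_one, e_zero, e_one, e_two]
  rw [derivative_add, derivative_mul, derivative_smul, derivative_X]
  simp only [smul_eq_C_mul, map_mul, map_sub, map_pow, map_ofNat]
  ring

/-- For every `λ ∈ ℂ`, `π_λ(Z)` is multiplication by `q(λ)·x = (λ² − λ)·x` on `ℂ[x]`. -/
theorem piU_Zel (lam : ℂ) (g : Polynomial ℂ) :
    piU lam Zel g = (lam ^ 2 - lam) • (Polynomial.X * g) := by
  have two_smul_eq := piU_two_smul_Zel_apply lam g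
  rw [map_smul, LinearMap.smul_apply, mul_smul] at two_smul_eq
  exact smul_right_injective _ two_ne_zero two_smul_eq
end
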